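/- arXiv:2507.01406 — 5 statements merged into one kernel-verified Lean document; each statement's English description precedes it below -/
import Mathlib

section
/- Let ν be a probability measure on [0,1]^2 whose two marginals are both the uniform distribution on [0,1] (a copula measure), and let φ1, φ2 : [0,1] → (0,∞) be nondecreasing, strictly positive functions with 0 < ∫_{[0,1]^2} φ1(u1) φ2(u2) dν < ∞. Define A(x1,x2) = ∫_{[0,x1]×[0,x2]} φ1(u1) φ2(u2) dν(u1,u2), B1(x1) = A(x1,1), and B2(x2) = A(1,x2). If A(x1,x2) = min( B1(x1), B2(x2) ) for all (x1,x2) ∈ [0,1]^2, then ν is the comonotone copula measure, i.e., ν([0,x1]×[0,x2]) = min(x1,x2) for all x1, x2 ∈ [0,1]; equivalently ν is concentrated on the diagonal {(u,u) : u ∈ [0,1]}. -/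
open MeasureTheory Set

/-!
The min identity at `(x1, x2)` says that the weighted mass of the rectangle `[0,x1] × [0,x2]`
equals that of one of the two strips `[0,x1] × [0,1]` or `[0,1] × [0,x2]` containing it. Since
the weight is strictly positive on the unit square, the difference of the sets is `ν`-null, so
`ν` of the rectangle equals `ν` of that strip, which the uniform marginals evaluate to `x1`
(resp. `x2`); monotonicity of `ν` under the other strip gives the comparison with `min x1 x2`.
-/

section PositiveWeight

variable {α : Type*} [MeasurableSpace α] {μ : Measure α} {f : α → ℝ} {s t : Set α}

theorem measure_eq_zero_of_setIntegral_eq_zero (hs : MeasurableSet s) (hf : IntegrableOn f s μ)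
    (hpos : ∀ x ∈ s, 0 < f x) (h : ∫ x in s, f x ∂μ = 0) : μ s = 0 := by
  have hnonneg : 0 ≤ᵐ[μ.restrict s] f := ae_restrict_of_forall_mem hs fun x hx => (hpos x hx).le
  have hsupp : Function.support f ∩ s = s := inter_eq_right.2 fun x hx => (hpos x hx).ne'
  have := (setIntegral_pos_iff_support_of_nonneg_ae hnonneg hf).not.1 h.not_gt
  rwa [hsupp, not_lt, nonpos_iff_eq_zero] at this

theorem measure_eq_of_setIntegral_eq_of_subset (hs : MeasurableSet s) (ht : MeasurableSet t)
    (hst : s ⊆ t) (hf : IntegrableOn f t μ) (hpos : ∀ x ∈ t \ s, 0 < f x)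
    (h : ∫ x in s, f x ∂μ = ∫ x in t, f x ∂μ) : μ s = μ t := by
  refine measure_eq_measure_of_null_sdiff hst ?_
  refine measure_eq_zero_of_setIntegral_eq_zero (ht.diff hs) (hf.mono_set sdiff_subset) hpos ?_
  rw [setIntegral_sdiff hs hf hst, h, sub_self]

end PositiveWeight

section Marginals

variable {α β : Type*} [MeasurableSpace α] [MeasurableSpace β] {ν : Measure (α × β)}

theorem measure_prod_eq_measure_preimage_fst {s : Set α} {t : Set β}
    (ht : ∀ᵐ p ∂ν, p.2 ∈ t) : ν (s ×ˢ t) = ν (Prod.fst ⁻¹' s) := by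
  rw [prod_eq]
  exact measure_inter_conull (ae_iff.1 ht)

theorem ae_snd_mem_of_map_snd_eq_restrict {μ : Measure β} {t : Set β} (ht : MeasurableSet t)
    (hmarg : ν.map Prod.snd = μ.restrict t) : ∀ᵐ p ∂ν, p.2 ∈ t :=
  ae_of_ae_map measurable_snd.aemeasurable (hmarg ▸ ae_restrict_mem ht)

end Marginals

section Copula

variable {ν : Measure (ℝ × ℝ)}

theorem measure_Icc_prod_Icc_zero_one
    (hmarg1 : ν.map Prod.fst = volume.restrict (Icc (0:ℝ) 1))
    (hmarg2 : ν.map Prod.snd = volume.restrict (Icc (0:ℝ) 1)) {a : ℝ} (ha : a ∈ Icc (0:ℝ) 1) :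
    ν (Icc 0 a ×ˢ Icc 0 1) = ENNReal.ofReal a := by
  rw [measure_prod_eq_measure_preimage_fst
      (ae_snd_mem_of_map_snd_eq_restrict measurableSet_Icc hmarg2),
    ← Measure.map_apply measurable_fst measurableSet_Icc, hmarg1,
    Measure.restrict_apply measurableSet_Icc, inter_eq_left.2 (Icc_subset_Icc_right ha.2),
    Real.volume_Icc, sub_zero]

theorem measure_Icc_zero_one_prod_Icc
    (hmarg1 : ν.map Prod.fst = volume.restrict (Icc (0:ℝ) 1))
    (hmarg2 : ν.map Prod.snd = volume.restrict (Icc (0:ℝ) 1)) {a : ℝ} (ha : a ∈ Icc (0:ℝ) 1) :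
    ν (Icc 0 1 ×ˢ Icc 0 a) = ENNReal.ofReal a := by
  rw [← preimage_swap_prod, ← Measure.map_apply measurable_swap
      (measurableSet_Icc.prod measurableSet_Icc)]
  exact measure_Icc_prod_Icc_zero_one
    ((Measure.map_map measurable_fst measurable_swap).trans hmarg2)
    ((Measure.map_map measurable_snd measurable_swap).trans hmarg1) ha

end Copula

theorem stmt5_general (ν : Measure (ℝ × ℝ))
    (hmarg1 : ν.map Prod.fst = volume.restrict (Icc (0:ℝ) 1))
    (hmarg2 : ν.map Prod.snd = volume.restrict (Icc (0:ℝ) 1))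
    (φ1 φ2 : ℝ → ℝ)
    (hφ1pos : ∀ u ∈ Icc (0:ℝ) 1, 0 < φ1 u) (hφ2pos : ∀ u ∈ Icc (0:ℝ) 1, 0 < φ2 u)
    (hint : Integrable (fun p : ℝ × ℝ => φ1 p.1 * φ2 p.2) ν)
    (hmin : ∀ x1 ∈ Icc (0:ℝ) 1, ∀ x2 ∈ Icc (0:ℝ) 1,
      (∫ p in Icc (0:ℝ) x1 ×ˢ Icc (0:ℝ) x2, φ1 p.1 * φ2 p.2 ∂ν)
        = min (∫ p in Icc (0:ℝ) x1 ×ˢ Icc (0:ℝ) 1, φ1 p.1 * φ2 p.2 ∂ν)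
            (∫ p in Icc (0:ℝ) 1 ×ˢ Icc (0:ℝ) x2, φ1 p.1 * φ2 p.2 ∂ν)) :
    ∀ x1 ∈ Icc (0:ℝ) 1, ∀ x2 ∈ Icc (0:ℝ) 1,
      (ν (Icc (0:ℝ) x1 ×ˢ Icc (0:ℝ) x2)).toReal = min x1 x2 := by
  intro x1 hx1 x2 hx2
  have hweight : ∀ p ∈ Icc (0:ℝ) 1 ×ˢ Icc (0:ℝ) 1, 0 < φ1 p.1 * φ2 p.2 := fun p hp =>
    mul_pos (hφ1pos _ hp.1) (hφ2pos _ hp.2)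
  have hsub1 : Icc 0 x1 ⊆ Icc (0:ℝ) 1 := Icc_subset_Icc_right hx1.2
  have hsub2 : Icc 0 x2 ⊆ Icc (0:ℝ) 1 := Icc_subset_Icc_right hx2.2
  have hrect : MeasurableSet (Icc (0:ℝ) x1 ×ˢ Icc (0:ℝ) x2) :=
    measurableSet_Icc.prod measurableSet_Icc
  have hB1 := measure_Icc_prod_Icc_zero_one hmarg1 hmarg2 hx1
  have hB2 := measure_Icc_zero_one_prod_Icc hmarg1 hmarg2 hx2
  rcases min_choice (∫ p in Icc (0:ℝ) x1 ×ˢ Icc (0:ℝ) 1, φ1 p.1 * φ2 p.2 ∂ν)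
      (∫ p in Icc (0:ℝ) 1 ×ˢ Icc (0:ℝ) x2, φ1 p.1 * φ2 p.2 ∂ν) with h | h <;>
    rw [← hmin x1 hx1 x2 hx2] at h
  · have hA : ν (Icc 0 x1 ×ˢ Icc 0 x2) = ENNReal.ofReal x1 :=
      hB1 ▸ measure_eq_of_setIntegral_eq_of_subset hrect (measurableSet_Icc.prod measurableSet_Icc)
        (prod_mono_right hsub2) hint.integrableOn
        (fun p hp => hweight p (prod_mono_left hsub1 hp.1)) h
    have hle : x1 ≤ x2 :=
      (ENNReal.ofReal_le_ofReal_iff hx2.1).1 (hA ▸ hB2 ▸ measure_mono (prod_mono_left hsub1))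
    rw [hA, ENNReal.toReal_ofReal hx1.1, min_eq_left hle]
  · have hA : ν (Icc 0 x1 ×ˢ Icc 0 x2) = ENNReal.ofReal x2 :=
      hB2 ▸ measure_eq_of_setIntegral_eq_of_subset hrect (measurableSet_Icc.prod measurableSet_Icc)
        (prod_mono_left hsub1) hint.integrableOn
        (fun p hp => hweight p (prod_mono_right hsub2 hp.1)) h
    have hle : x2 ≤ x1 :=
      (ENNReal.ofReal_le_ofReal_iff hx1.1).1 (hA ▸ hB1 ▸ measure_mono (prod_mono_right hsub2))
    rw [hA, ENNReal.toReal_ofReal hx2.1, min_eq_right hle]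

/-- If a copula measure `ν` (both marginals uniform on `[0,1]`) and nondecreasing strictly
positive weights `φ1, φ2` satisfy `A(x1,x2) = min(B1(x1), B2(x2))` for all `(x1,x2) ∈ [0,1]²`,
where `A(x1,x2) = ∫_{[0,x1]×[0,x2]} φ1(u1)φ2(u2) dν`, `B1(x1) = A(x1,1)`, `B2(x2) = A(1,x2)`,
then `ν` is the comonotone copula measure: `ν([0,x1]×[0,x2]) = min(x1,x2)`. -/
theorem stmt5 (ν : Measure (ℝ × ℝ)) [IsProbabilityMeasure ν]
    (hmarg1 : ν.map Prod.fst = volume.restrict (Icc (0:ℝ) 1))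
    (hmarg2 : ν.map Prod.snd = volume.restrict (Icc (0:ℝ) 1))
    (φ1 φ2 : ℝ → ℝ)
    (hφ1pos : ∀ u ∈ Icc (0:ℝ) 1, 0 < φ1 u) (hφ2pos : ∀ u ∈ Icc (0:ℝ) 1, 0 < φ2 u)
    (hφ1mono : MonotoneOn φ1 (Icc (0:ℝ) 1)) (hφ2mono : MonotoneOn φ2 (Icc (0:ℝ) 1))
    (hpos : 0 < ∫ p : ℝ × ℝ, φ1 p.1 * φ2 p.2 ∂ν)
    (hint : Integrable (fun p : ℝ × ℝ => φ1 p.1 * φ2 p.2) ν)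
    (hmin : ∀ x1 ∈ Icc (0:ℝ) 1, ∀ x2 ∈ Icc (0:ℝ) 1,
      (∫ p in Icc (0:ℝ) x1 ×ˢ Icc (0:ℝ) x2, φ1 p.1 * φ2 p.2 ∂ν)
        = min (∫ p in Icc (0:ℝ) x1 ×ˢ Icc (0:ℝ) 1, φ1 p.1 * φ2 p.2 ∂ν)
            (∫ p in Icc (0:ℝ) 1 ×ˢ Icc (0:ℝ) x2, φ1 p.1 * φ2 p.2 ∂ν)) :
    ∀ x1 ∈ Icc (0:ℝ) 1, ∀ x2 ∈ Icc (0:ℝ) 1,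
      (ν (Icc (0:ℝ) x1 ×ˢ Icc (0:ℝ) x2)).toReal = min x1 x2 :=
  stmt5_general ν hmarg1 hmarg2 φ1 φ2 hφ1pos hφ2pos hint hmin
end

section
/- Let F1 be the distribution function of a nonnegative random variable with generalized inverse F1^{-1} satisfying 0 < ∫_0^1 (F1^{-1}(u))^2 du < ∞. Define the sequence of distribution functions on [0,1] by L^0(x) = (∫_0^x (F1^{-1}(u))^2 du) / (∫_0^1 (F1^{-1}(u))^2 du) and, for i ≥ 0, L^{i+1}(x) = (∫_0^x (L^{i,-1}(u))^2 du) / (∫_0^1 (L^{i,-1}(u))^2 du), where L^{i,-1} is the generalized inverse of L^i. Then L^n converges uniformly on [0,1] to the square-law distribution function x ↦ x^2. -/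
open MeasureTheory Set Filter

/-- Generalized inverse (quantile function) of a nondecreasing function. -/
noncomputable def genInv (F : ℝ → ℝ) (u : ℝ) : ℝ := sInf {y : ℝ | u ≤ F y}

/-!
Write `Q` for the quantile function `genInv L` of an iterate `L`. If `Q` obeys the two-sided
scaling law `s ^ b * Q v ≤ Q (s * v) ≤ s ^ a * Q v` on `(0, 1]`, the substitution `u = s * t` in
`∫_0^{s v} Q²` shows that the next iterate obeys the same law with exponents `1 + 2a`, `1 + 2b`,
and inverting a law `L (x * y) ≤ x ^ A * L y` yields `x ^ A⁻¹ * Q w ≤ Q (x * w)` (and dually).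
Hence the exponents of the quantile functions evolve by `(a, b) ↦ ((1 + 2b)⁻¹, (1 + 2a)⁻¹)`,
starting from `(0, 1)`, which monotonicity of quantile functions alone provides. The gap `b - a`
shrinks by a factor `2 / 3` at each step, and `x ^ (1 + 2b) ≤ L x ≤ x ^ (1 + 2a)` squeezes the
iterates onto `x ^ 2`.
-/

def ScalesAtMost (f : ℝ → ℝ) (a : ℝ) : Prop :=
  ∀ s ∈ Ioc (0:ℝ) 1, ∀ v ∈ Ioc (0:ℝ) 1, f (s * v) ≤ s ^ a * f v

def ScalesAtLeast (f : ℝ → ℝ) (b : ℝ) : Prop :=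
  ∀ s ∈ Ioc (0:ℝ) 1, ∀ v ∈ Ioc (0:ℝ) 1, s ^ b * f v ≤ f (s * v)

lemma mul_mem_Ioc_zero_one {s v : ℝ} (hs : s ∈ Ioc (0:ℝ) 1) (hv : v ∈ Ioc (0:ℝ) 1) :
    s * v ∈ Ioc (0:ℝ) 1 :=
  ⟨mul_pos hs.1 hv.1, mul_le_one₀ hs.2 hv.1.le hv.2⟩

lemma rpow_mem_Ioc_zero_one {s a : ℝ} (hs : s ∈ Ioc (0:ℝ) 1) (ha : 0 ≤ a) :
    s ^ a ∈ Ioc (0:ℝ) 1 :=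
  ⟨Real.rpow_pos_of_pos hs.1 a, Real.rpow_le_one hs.1.le hs.2 ha⟩

lemma ScalesAtMost.le_rpow {f : ℝ → ℝ} {a : ℝ} (h : ScalesAtMost f a) (h1 : f 1 = 1) {x : ℝ}
    (hx : x ∈ Ioc (0:ℝ) 1) : f x ≤ x ^ a := by
  simpa [h1] using h x hx 1 ⟨one_pos, le_rfl⟩

lemma ScalesAtLeast.rpow_le {f : ℝ → ℝ} {b : ℝ} (h : ScalesAtLeast f b) (h1 : f 1 = 1) {x : ℝ}
    (hx : x ∈ Ioc (0:ℝ) 1) : x ^ b ≤ f x := by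
  simpa [h1] using h x hx 1 ⟨one_pos, le_rfl⟩

lemma rpow_two_mul {s : ℝ} (hs : 0 ≤ s) (a : ℝ) : s ^ (2 * a) = (s ^ a) ^ 2 := by
  rw [mul_comm, Real.rpow_mul hs, Real.rpow_two]

lemma ScalesAtMost.sq {Q : ℝ → ℝ} {a : ℝ} (h : ScalesAtMost Q a)
    (hQ : ∀ u ∈ Ioc (0:ℝ) 1, 0 ≤ Q u) : ScalesAtMost (fun u => Q u ^ 2) (2 * a) := by
  intro s hs v hv
  rw [rpow_two_mul hs.1.le, ← mul_pow]
  exact pow_le_pow_left₀ (hQ _ (mul_mem_Ioc_zero_one hs hv)) (h s hs v hv) 2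

lemma ScalesAtLeast.sq {Q : ℝ → ℝ} {b : ℝ} (h : ScalesAtLeast Q b)
    (hQ : ∀ u ∈ Ioc (0:ℝ) 1, 0 ≤ Q u) : ScalesAtLeast (fun u => Q u ^ 2) (2 * b) := by
  intro s hs v hv
  rw [rpow_two_mul hs.1.le, ← mul_pow]
  exact pow_le_pow_left₀ (mul_nonneg (Real.rpow_pos_of_pos hs.1 b).le (hQ v hv)) (h s hs v hv) 2

noncomputable def lorenzCurve (g : ℝ → ℝ) (x : ℝ) : ℝ :=
  (∫ u in Ioc (0:ℝ) x, g u) / ∫ u in Ioc (0:ℝ) 1, g u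

lemma setIntegral_Ioc_zero_mul (g : ℝ → ℝ) {s v : ℝ} (hs : 0 < s) (hv : 0 ≤ v) :
    ∫ u in Ioc (0:ℝ) (s * v), g u = s * ∫ t in Ioc (0:ℝ) v, g (s * t) := by
  have := intervalIntegral.smul_integral_comp_mul_left g s (a := 0) (b := v)
  rw [mul_zero, smul_eq_mul] at this
  rw [← intervalIntegral.integral_of_le (by positivity), ← intervalIntegral.integral_of_le hv, this]

lemma MeasureTheory.IntegrableOn.comp_mul_left_Ioc {g : ℝ → ℝ}
    (hg : IntegrableOn g (Ioc (0:ℝ) 1)) {s v : ℝ} (hs : 0 < s) (hv : 0 ≤ v) (hsv : s * v ≤ 1) :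
    IntegrableOn (fun t => g (s * t)) (Ioc (0:ℝ) v) := by
  have hg' : IntervalIntegrable g volume 0 (s * v) :=
    (intervalIntegrable_iff_integrableOn_Ioc_of_le (by positivity)).2
      (hg.mono_set (Ioc_subset_Ioc_right hsv))
  have := hg'.comp_mul_left (c := s)
  rw [zero_div, mul_div_cancel_left₀ _ hs.ne'] at this
  exact (intervalIntegrable_iff_integrableOn_Ioc_of_le hv).1 this

lemma ScalesAtMost.lorenzCurve {g : ℝ → ℝ} {c : ℝ} (h : ScalesAtMost g c) (hg : ∀ u, 0 ≤ g u)
    (hint : IntegrableOn g (Ioc (0:ℝ) 1)) : ScalesAtMost (lorenzCurve g) (1 + c) := by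
  intro s hs v hv
  have hmono : ∫ t in Ioc (0:ℝ) v, g (s * t) ≤ s ^ c * ∫ t in Ioc (0:ℝ) v, g t := by
    rw [← integral_const_mul]
    exact setIntegral_mono_on
      (hint.comp_mul_left_Ioc hs.1 hv.1.le (mul_le_one₀ hs.2 hv.1.le hv.2))
      ((hint.mono_set (Ioc_subset_Ioc_right hv.2)).const_mul _) measurableSet_Ioc
      fun t ht => h s hs t ⟨ht.1, ht.2.trans hv.2⟩
  unfold _root_.lorenzCurve
  rw [setIntegral_Ioc_zero_mul g hs.1 hv.1.le, ← mul_div_assoc]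
  refine div_le_div_of_nonneg_right ?_ (setIntegral_nonneg measurableSet_Ioc fun u _ => hg u)
  calc s * ∫ t in Ioc (0:ℝ) v, g (s * t) ≤ s * (s ^ c * ∫ t in Ioc (0:ℝ) v, g t) :=
        mul_le_mul_of_nonneg_left hmono hs.1.le
    _ = s ^ (1 + c) * ∫ t in Ioc (0:ℝ) v, g t := by
        rw [Real.rpow_add hs.1, Real.rpow_one, mul_assoc]

lemma ScalesAtLeast.lorenzCurve {g : ℝ → ℝ} {c : ℝ} (h : ScalesAtLeast g c) (hg : ∀ u, 0 ≤ g u)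
    (hint : IntegrableOn g (Ioc (0:ℝ) 1)) : ScalesAtLeast (lorenzCurve g) (1 + c) := by
  intro s hs v hv
  have hmono : s ^ c * ∫ t in Ioc (0:ℝ) v, g t ≤ ∫ t in Ioc (0:ℝ) v, g (s * t) := by
    rw [← integral_const_mul]
    exact setIntegral_mono_on ((hint.mono_set (Ioc_subset_Ioc_right hv.2)).const_mul _)
      (hint.comp_mul_left_Ioc hs.1 hv.1.le (mul_le_one₀ hs.2 hv.1.le hv.2)) measurableSet_Ioc
      fun t ht => h s hs t ⟨ht.1, ht.2.trans hv.2⟩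
  unfold _root_.lorenzCurve
  rw [setIntegral_Ioc_zero_mul g hs.1 hv.1.le, ← mul_div_assoc]
  refine div_le_div_of_nonneg_right ?_ (setIntegral_nonneg measurableSet_Ioc fun u _ => hg u)
  calc s ^ (1 + c) * ∫ t in Ioc (0:ℝ) v, g t = s * (s ^ c * ∫ t in Ioc (0:ℝ) v, g t) := by
        rw [Real.rpow_add hs.1, Real.rpow_one, mul_assoc]
    _ ≤ s * ∫ t in Ioc (0:ℝ) v, g (s * t) := mul_le_mul_of_nonneg_left hmono hs.1.le

structure IsContinuousUnitCDF (L : ℝ → ℝ) : Prop where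
  mono : Monotone L
  continuous : Continuous L
  eq_zero : ∀ y ≤ 0, L y = 0
  eq_one : ∀ y, 1 ≤ y → L y = 1

lemma isContinuousUnitCDF_lorenzCurve {g : ℝ → ℝ} (hg : ∀ u, 0 ≤ g u)
    (hg1 : ∀ u, 1 < u → g u = 0) (hint : IntegrableOn g (Ioc (0:ℝ) 1))
    (hpos : 0 < ∫ u in Ioc (0:ℝ) 1, g u) : IsContinuousUnitCDF (lorenzCurve g) := by
  set G := (Ioc (0:ℝ) 1).indicator g
  have hG : Integrable G := (integrable_indicator_iff measurableSet_Ioc).2 hint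
  have hgG : ∀ x, ∫ u in Ioc (0:ℝ) x, g u = ∫ u in Ioc (0:ℝ) x, G u := by
    refine fun x => setIntegral_congr_fun measurableSet_Ioc fun u hu => ?_
    rcases le_or_gt u 1 with hu1 | hu1
    · exact (indicator_of_mem (show u ∈ Ioc (0:ℝ) 1 from ⟨hu.1, hu1⟩) g).symm
    · rw [hg1 u hu1]
      exact (indicator_of_notMem (fun h : u ∈ Ioc (0:ℝ) 1 => hu1.not_ge h.2) g).symm
  have hprim : ∀ x, ∫ u in Ioc (0:ℝ) x, G u = ∫ u in (0:ℝ)..x, G u := by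
    intro x
    rcases le_total 0 x with hx | hx
    · exact (intervalIntegral.integral_of_le hx).symm
    · have hG0 : ∫ u in Ioc x 0, G u = 0 := setIntegral_eq_zero_of_forall_eq_zero fun u hu =>
        indicator_of_notMem (fun h : u ∈ Ioc (0:ℝ) 1 => (h.1.trans_le hu.2).false) g
      rw [intervalIntegral.integral_of_ge hx, hG0, Ioc_eq_empty (not_lt.2 hx)]
      simp
  refine ⟨fun a b hab => ?_, ?_, fun y hy => ?_, fun y hy => ?_⟩
  · refine div_le_div_of_nonneg_right ?_ hpos.le
    rw [hgG, hgG]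
    exact setIntegral_mono_set hG.integrableOn (ae_of_all _ (indicator_nonneg fun u _ => hg u))
      (Ioc_subset_Ioc_right hab).eventuallyLE
  · have : lorenzCurve g = fun x => (∫ u in (0:ℝ)..x, G u) / ∫ u in Ioc (0:ℝ) 1, g u :=
      funext fun x => by rw [lorenzCurve, hgG, hprim]
    rw [this]
    exact (hG.continuous_primitive 0).div_const _
  · rw [lorenzCurve, Ioc_eq_empty (not_lt.2 hy), Measure.restrict_empty, integral_zero_measure,
      zero_div]
  · rw [lorenzCurve, hgG, setIntegral_indicator measurableSet_Ioc,
      inter_eq_right.2 (Ioc_subset_Ioc_right hy), div_self hpos.ne']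

lemma genInv_eq_zero_of_one_lt {F : ℝ → ℝ} (hF : ∀ y, F y ≤ 1) {u : ℝ} (hu : 1 < u) :
    genInv F u = 0 := by
  have : {y | u ≤ F y} = ∅ := eq_empty_of_forall_notMem fun y hy => (hF y).not_gt (hu.trans_le hy)
  rw [genInv, this, Real.sInf_empty]

namespace IsContinuousUnitCDF

variable {L : ℝ → ℝ}

lemma nonneg (hL : IsContinuousUnitCDF L) (y : ℝ) : 0 ≤ L y :=
  (hL.eq_zero _ (min_le_right y 0)).symm.le.trans (hL.mono (min_le_left y 0))

lemma le_one (hL : IsContinuousUnitCDF L) (y : ℝ) : L y ≤ 1 :=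
  (hL.mono (le_max_left y 1)).trans (hL.eq_one _ (le_max_right y 1)).le

lemma genInv_le_iff (hL : IsContinuousUnitCDF L) {u : ℝ} (hu : u ∈ Ioc (0:ℝ) 1) {y : ℝ} :
    genInv L u ≤ y ↔ u ≤ L y := by
  have hbdd : BddBelow {y | u ≤ L y} :=
    ⟨0, fun z hz => not_lt.1 fun hz0 => hu.1.not_ge (hz.trans (hL.eq_zero z hz0.le).le)⟩
  have hne : {y | u ≤ L y}.Nonempty := ⟨1, show u ≤ L 1 by rw [hL.eq_one 1 le_rfl]; exact hu.2⟩
  have hmem : u ≤ L (genInv L u) :=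
    (isClosed_le continuous_const hL.continuous).csInf_mem hne hbdd
  exact ⟨fun h => hmem.trans (hL.mono h), fun h => csInf_le hbdd h⟩

lemma le_apply_genInv (hL : IsContinuousUnitCDF L) {u : ℝ} (hu : u ∈ Ioc (0:ℝ) 1) :
    u ≤ L (genInv L u) :=
  (hL.genInv_le_iff hu).1 le_rfl

lemma genInv_mem_Ioc (hL : IsContinuousUnitCDF L) {u : ℝ} (hu : u ∈ Ioc (0:ℝ) 1) :
    genInv L u ∈ Ioc (0:ℝ) 1 := by
  refine ⟨lt_of_not_ge fun h => ?_, (hL.genInv_le_iff hu).2 ?_⟩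
  · have := (hL.genInv_le_iff hu).1 h
    rw [hL.eq_zero 0 le_rfl] at this
    exact hu.1.not_ge this
  · rw [hL.eq_one 1 le_rfl]
    exact hu.2

lemma genInv_zero (hL : IsContinuousUnitCDF L) : genInv L 0 = 0 := by
  have : {y | (0:ℝ) ≤ L y} = univ := eq_univ_of_forall hL.nonneg
  rw [genInv, this]
  exact Real.sInf_of_not_bddBelow not_bddBelow_univ

lemma monotoneOn_genInv (hL : IsContinuousUnitCDF L) : MonotoneOn (genInv L) (Icc 0 1) := by
  intro u hu v hv huv
  rcases hu.1.eq_or_lt with rfl | hu0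
  · rw [hL.genInv_zero]
    rcases hv.1.eq_or_lt with rfl | hv0
    · rw [hL.genInv_zero]
    · exact (hL.genInv_mem_Ioc ⟨hv0, hv.2⟩).1.le
  · rw [hL.genInv_le_iff ⟨hu0, hu.2⟩]
    exact huv.trans (hL.le_apply_genInv ⟨hu0.trans_le huv, hv.2⟩)

lemma integrableOn_genInv_sq (hL : IsContinuousUnitCDF L) :
    IntegrableOn (fun u => genInv L u ^ 2) (Ioc (0:ℝ) 1) := by
  have hnonneg : ∀ u ∈ Icc (0:ℝ) 1, 0 ≤ genInv L u := fun u hu => by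
    simpa [hL.genInv_zero] using hL.monotoneOn_genInv ⟨le_rfl, zero_le_one⟩ hu hu.1
  have hmono : MonotoneOn (fun u => genInv L u ^ 2) (Icc 0 1) := fun u hu v hv huv =>
    pow_le_pow_left₀ (hnonneg u hu) (hL.monotoneOn_genInv hu hv huv) 2
  exact (hmono.integrableOn_isCompact isCompact_Icc).mono_set Ioc_subset_Icc_self

lemma integral_genInv_sq_pos (hL : IsContinuousUnitCDF L) :
    0 < ∫ u in Ioc (0:ℝ) 1, genInv L u ^ 2 := by
  rw [setIntegral_pos_iff_support_of_nonneg_ae (ae_of_all _ fun u => sq_nonneg _)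
    hL.integrableOn_genInv_sq]
  have hsupp : Ioc (0:ℝ) 1 ⊆ Function.support fun u => genInv L u ^ 2 := fun u hu =>
    pow_ne_zero 2 (hL.genInv_mem_Ioc hu).1.ne'
  rw [inter_eq_right.2 hsupp, Real.volume_Ioc]
  norm_num

lemma lorenzCurve_genInv_sq (hL : IsContinuousUnitCDF L) :
    IsContinuousUnitCDF (lorenzCurve fun u => genInv L u ^ 2) :=
  isContinuousUnitCDF_lorenzCurve (fun _ => sq_nonneg _)
    (fun u hu => by rw [genInv_eq_zero_of_one_lt hL.le_one hu, zero_pow two_ne_zero])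
    hL.integrableOn_genInv_sq hL.integral_genInv_sq_pos

lemma scalesAtMost_genInv_zero (hL : IsContinuousUnitCDF L) : ScalesAtMost (genInv L) 0 := by
  intro s hs v hv
  rw [Real.rpow_zero, one_mul, hL.genInv_le_iff (mul_mem_Ioc_zero_one hs hv)]
  exact (mul_le_of_le_one_left hv.1.le hs.2).trans (hL.le_apply_genInv hv)

lemma scalesAtLeast_genInv (hL : IsContinuousUnitCDF L) {A : ℝ} (hA : 0 < A)
    (h : ScalesAtMost L A) : ScalesAtLeast (genInv L) A⁻¹ := by
  intro s hs w hw
  have hx := rpow_mem_Ioc_zero_one hs (inv_nonneg.2 hA.le)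
  have hsw := mul_mem_Ioc_zero_one hs hw
  set t := genInv L (s * w)
  rw [← le_div_iff₀' hx.1, hL.genInv_le_iff hw]
  rcases le_or_gt 1 (t / s ^ A⁻¹) with h1 | h1
  · rw [hL.eq_one _ h1]
    exact hw.2
  · have hL_t := h _ hx (t / s ^ A⁻¹) ⟨div_pos (hL.genInv_mem_Ioc hsw).1 hx.1, h1.le⟩
    rw [mul_div_cancel₀ _ hx.1.ne', Real.rpow_inv_rpow hs.1.le hA.ne'] at hL_t
    exact le_of_mul_le_mul_left ((hL.le_apply_genInv hsw).trans hL_t) hs.1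

lemma scalesAtMost_genInv (hL : IsContinuousUnitCDF L) {B : ℝ} (hB : 0 < B)
    (h : ScalesAtLeast L B) : ScalesAtMost (genInv L) B⁻¹ := by
  intro s hs w hw
  have hL_t := h _ (rpow_mem_Ioc_zero_one hs (inv_nonneg.2 hB.le)) _ (hL.genInv_mem_Ioc hw)
  rw [Real.rpow_inv_rpow hs.1.le hB.ne'] at hL_t
  rw [hL.genInv_le_iff (mul_mem_Ioc_zero_one hs hw)]
  exact (mul_le_mul_of_nonneg_left (hL.le_apply_genInv hw) hs.1.le).trans hL_t

lemma scalesAtMost_lorenzCurve_genInv_sq (hL : IsContinuousUnitCDF L) {a : ℝ}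
    (h : ScalesAtMost (genInv L) a) :
    ScalesAtMost (lorenzCurve fun u => genInv L u ^ 2) (1 + 2 * a) :=
  (h.sq fun _ hu => (hL.genInv_mem_Ioc hu).1.le).lorenzCurve (fun _ => sq_nonneg _)
    hL.integrableOn_genInv_sq

lemma scalesAtLeast_lorenzCurve_genInv_sq (hL : IsContinuousUnitCDF L) {b : ℝ}
    (h : ScalesAtLeast (genInv L) b) :
    ScalesAtLeast (lorenzCurve fun u => genInv L u ^ 2) (1 + 2 * b) :=
  (h.sq fun _ hu => (hL.genInv_mem_Ioc hu).1.le).lorenzCurve (fun _ => sq_nonneg _)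
    hL.integrableOn_genInv_sq

end IsContinuousUnitCDF

noncomputable def scalingExponents : ℕ → ℝ × ℝ
  | 0 => (0, 1)
  | k + 1 => ((1 + 2 * (scalingExponents k).2)⁻¹, (1 + 2 * (scalingExponents k).1)⁻¹)

-- `3 ≤ (1 + 2a)(1 + 2b)` is the invariant behind the contraction factor `2 / 3` of the gap.
lemma scalingExponents_bounds (k : ℕ) :
    0 ≤ (scalingExponents k).1 ∧ (scalingExponents k).1 ≤ 1 / 2 ∧
      1 / 2 ≤ (scalingExponents k).2 ∧ (scalingExponents k).2 ≤ 1 ∧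
      3 ≤ (1 + 2 * (scalingExponents k).1) * (1 + 2 * (scalingExponents k).2) := by
  induction k with
  | zero => norm_num [scalingExponents]
  | succ k ih =>
    simp only [scalingExponents]
    generalize (scalingExponents k).1 = a at ih ⊢
    generalize (scalingExponents k).2 = b at ih ⊢
    obtain ⟨ha0, ha1, hb0, hb1, hab⟩ := ih
    have hA : 0 < 1 + 2 * a := by linarith
    have hB : 0 < 1 + 2 * b := by linarith
    have hprod : (1 + 2 * (1 + 2 * b)⁻¹) * (1 + 2 * (1 + 2 * a)⁻¹)
        = (3 + 2 * b) * (3 + 2 * a) / ((1 + 2 * b) * (1 + 2 * a)) := by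
      field_simp
      ring
    refine ⟨by positivity, ?_, ?_, ?_, ?_⟩
    · rw [inv_le_comm₀ hB (by norm_num)]; linarith
    · rw [le_inv_comm₀ (by norm_num) hA]; linarith
    · rw [inv_le_one₀ hA]; linarith
    · rw [hprod, le_div_iff₀ (by positivity)]
      nlinarith

lemma scalingExponents_gap_le (k : ℕ) :
    (scalingExponents k).2 - (scalingExponents k).1 ≤ (2 / 3) ^ k := by
  induction k with
  | zero => norm_num [scalingExponents]
  | succ k ih =>
    obtain ⟨ha0, -, hb0, -, hab⟩ := scalingExponents_bounds k
    simp only [scalingExponents]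
    generalize (scalingExponents k).1 = a at ih ha0 hab ⊢
    generalize (scalingExponents k).2 = b at ih hb0 hab ⊢
    have hA : 0 < 1 + 2 * a := by linarith
    have hB : 0 < 1 + 2 * b := by linarith
    have hgap : (1 + 2 * a)⁻¹ - (1 + 2 * b)⁻¹ = 2 * (b - a) / ((1 + 2 * a) * (1 + 2 * b)) := by
      field_simp
      ring
    rw [hgap, div_le_iff₀ (by positivity), pow_succ]
    nlinarith [mul_le_mul_of_nonneg_left hab (pow_nonneg (by norm_num : (0:ℝ) ≤ 2 / 3) k)]

lemma rpow_sub_rpow_le_sub {x a b : ℝ} (hx : x ∈ Icc (0:ℝ) 1) (ha : 1 ≤ a) (hab : a ≤ b) :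
    x ^ a - x ^ b ≤ b - a := by
  rcases hx.1.eq_or_lt with rfl | hx0
  · rw [Real.zero_rpow (by linarith), Real.zero_rpow (by linarith)]
    linarith
  have hxa : x ^ a ≤ x := by simpa using Real.rpow_le_rpow_of_exponent_ge hx0 hx.2 ha
  have hexp : 1 + (b - a) * Real.log x ≤ x ^ (b - a) := by
    rw [Real.rpow_def_of_pos hx0, mul_comm]
    linarith [Real.add_one_le_exp (Real.log x * (b - a))]
  have hxlog : -(Real.log x * x) < 1 :=
    (neg_le_abs _).trans_lt (Real.abs_log_mul_self_lt x hx0 hx.2)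
  have hlog : Real.log x ≤ 0 := Real.log_nonpos hx.1 hx.2
  calc x ^ a - x ^ b = x ^ a * (1 - x ^ (b - a)) := by
        rw [mul_sub, mul_one, ← Real.rpow_add hx0, add_sub_cancel]
    _ ≤ x * ((b - a) * -Real.log x) := by
        have : x ^ (b - a) ≤ 1 := Real.rpow_le_one hx.1 hx.2 (by linarith)
        exact mul_le_mul hxa (by linarith) (by linarith) hx.1
    _ = (b - a) * -(Real.log x * x) := by ring
    _ ≤ b - a := by nlinarith

lemma abs_sub_sq_le_of_rpow_bounds {x y a b : ℝ} (hx : x ∈ Icc (0:ℝ) 1) (ha : 0 ≤ a)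
    (ha' : a ≤ 1 / 2) (hb : 1 / 2 ≤ b) (hlo : x ^ (1 + 2 * b) ≤ y) (hhi : y ≤ x ^ (1 + 2 * a)) :
    |y - x ^ 2| ≤ 2 * (b - a) := by
  have hsq : x ^ 2 = x ^ (2:ℝ) := (Real.rpow_two x).symm
  have h1 : x ^ (1 + 2 * b) ≤ x ^ (2:ℝ) :=
    Real.rpow_le_rpow_of_exponent_ge' hx.1 hx.2 (by norm_num) (by linarith)
  have h2 : x ^ (2:ℝ) ≤ x ^ (1 + 2 * a) :=
    Real.rpow_le_rpow_of_exponent_ge' hx.1 hx.2 (by linarith) (by linarith)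
  have h3 := rpow_sub_rpow_le_sub hx (a := 1 + 2 * a) (b := 1 + 2 * b) (by linarith) (by linarith)
  rw [abs_le, hsq]
  constructor <;> linarith

section Iteration

variable {L : ℕ → ℝ → ℝ}

lemma isContinuousUnitCDF_iterate (h0 : IsContinuousUnitCDF (L 0))
    (hrec : ∀ n, L (n + 1) = lorenzCurve fun u => genInv (L n) u ^ 2) (n : ℕ) :
    IsContinuousUnitCDF (L n) := by
  induction n with
  | zero => exact h0
  | succ n ih => rw [hrec]; exact ih.lorenzCurve_genInv_sq

lemma scales_genInv_iterate (h0 : IsContinuousUnitCDF (L 0))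
    (hrec : ∀ n, L (n + 1) = lorenzCurve fun u => genInv (L n) u ^ 2) (k : ℕ) :
    ScalesAtMost (genInv (L (k + 1))) (scalingExponents k).1 ∧
      ScalesAtLeast (genInv (L (k + 1))) (scalingExponents k).2 := by
  have hL := isContinuousUnitCDF_iterate h0 hrec
  induction k with
  | zero =>
    have h1 := (hL 0).scalesAtMost_lorenzCurve_genInv_sq (hL 0).scalesAtMost_genInv_zero
    rw [← hrec, mul_zero, add_zero] at h1
    simpa [scalingExponents] using
      And.intro (hL 1).scalesAtMost_genInv_zero ((hL 1).scalesAtLeast_genInv one_pos h1)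
  | succ k ih =>
    obtain ⟨ha0, -, hb0, -⟩ := scalingExponents_bounds k
    have hLleast := (hL (k + 1)).scalesAtLeast_lorenzCurve_genInv_sq ih.2
    have hLmost := (hL (k + 1)).scalesAtMost_lorenzCurve_genInv_sq ih.1
    rw [← hrec] at hLleast hLmost
    exact ⟨(hL (k + 2)).scalesAtMost_genInv (by linarith) hLleast,
      (hL (k + 2)).scalesAtLeast_genInv (by linarith) hLmost⟩

lemma abs_iterate_sub_sq_le (h0 : IsContinuousUnitCDF (L 0))
    (hrec : ∀ n, L (n + 1) = lorenzCurve fun u => genInv (L n) u ^ 2) (k : ℕ) {x : ℝ}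
    (hx : x ∈ Icc (0:ℝ) 1) : |L (k + 2) x - x ^ 2| ≤ 2 * (2 / 3) ^ k := by
  have hL := isContinuousUnitCDF_iterate h0 hrec
  obtain ⟨ha0, ha1, hb0, -, -⟩ := scalingExponents_bounds k
  have hgap := scalingExponents_gap_le k
  rcases hx.1.eq_or_lt with rfl | hx0
  · rw [(hL (k + 2)).eq_zero 0 le_rfl]
    norm_num
  obtain ⟨hQmost, hQleast⟩ := scales_genInv_iterate h0 hrec k
  have hLmost := (hL (k + 1)).scalesAtMost_lorenzCurve_genInv_sq hQmost
  have hLleast := (hL (k + 1)).scalesAtLeast_lorenzCurve_genInv_sq hQleast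
  rw [← hrec] at hLmost hLleast
  have hone := (hL (k + 2)).eq_one 1 le_rfl
  refine (abs_sub_sq_le_of_rpow_bounds hx ha0 ha1 hb0 (hLleast.rpow_le hone ⟨hx0, hx.2⟩)
    (hLmost.le_rpow hone ⟨hx0, hx.2⟩)).trans ?_
  linarith

theorem tendstoUniformlyOn_iterate (h0 : IsContinuousUnitCDF (L 0))
    (hrec : ∀ n, L (n + 1) = lorenzCurve fun u => genInv (L n) u ^ 2) :
    TendstoUniformlyOn L (fun x => x ^ 2) atTop (Icc 0 1) := by
  rw [Metric.tendstoUniformlyOn_iff]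
  intro ε hε
  have hlim : Tendsto (fun k : ℕ => 2 * (2 / 3 : ℝ) ^ k) atTop (nhds 0) := by
    have := tendsto_pow_atTop_nhds_zero_of_lt_one (r := (2 / 3 : ℝ)) (by norm_num) (by norm_num)
    simpa using this.const_mul 2
  obtain ⟨N, hN⟩ := eventually_atTop.1 (hlim.eventually_lt_const hε)
  refine eventually_atTop.2 ⟨N + 2, fun n hn x hx => ?_⟩
  obtain ⟨k, rfl⟩ : ∃ k, n = k + 2 := ⟨n - 2, by omega⟩
  rw [dist_comm, Real.dist_eq]
  exact (abs_iterate_sub_sq_le h0 hrec k hx).trans_lt (hN k (by omega))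

end Iteration

theorem stmt10_general (F1 : ℝ → ℝ) (L : ℕ → ℝ → ℝ)
    (hF1mono : Monotone F1)
    (hF1lim : Tendsto F1 atTop (nhds 1))
    (hpos : 0 < ∫ u in Ioc (0:ℝ) 1, (genInv F1 u) ^ 2)
    (hfin : IntegrableOn (fun u => (genInv F1 u) ^ 2) (Ioc (0:ℝ) 1))
    (hL0 : ∀ x, L 0 x =
      (∫ u in Ioc (0:ℝ) x, (genInv F1 u) ^ 2) / ∫ u in Ioc (0:ℝ) 1, (genInv F1 u) ^ 2)
    (hLrec : ∀ i x, L (i + 1) x =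
      (∫ u in Ioc (0:ℝ) x, (genInv (L i) u) ^ 2) /
        ∫ u in Ioc (0:ℝ) 1, (genInv (L i) u) ^ 2) :
    TendstoUniformlyOn (fun n x => L n x) (fun x => x ^ 2) atTop (Icc (0:ℝ) 1) := by
  have hF1 : ∀ y, F1 y ≤ 1 := hF1mono.ge_of_tendsto hF1lim
  have h0 : IsContinuousUnitCDF (L 0) := by
    rw [show L 0 = lorenzCurve fun u => genInv F1 u ^ 2 from funext hL0]
    exact isContinuousUnitCDF_lorenzCurve (fun _ => sq_nonneg _)
      (fun u hu => by rw [genInv_eq_zero_of_one_lt hF1 hu, zero_pow two_ne_zero]) hfin hpos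
  exact tendstoUniformlyOn_iterate h0 fun n => funext (hLrec n)

/-- The comonotone marginal Lorenz iteration
`L^0(x) = ∫_0^x (F1⁻¹)² / ∫_0^1 (F1⁻¹)²`, `L^{i+1}(x) = ∫_0^x (L^{i,-1})² / ∫_0^1 (L^{i,-1})²`
converges uniformly on `[0,1]` to the square law `x ↦ x²`. -/
theorem stmt10 (F1 : ℝ → ℝ) (L : ℕ → ℝ → ℝ)
    (hF1mono : Monotone F1)
    (hF1neg : ∀ x, x < 0 → F1 x = 0)
    (hF1lim : Tendsto F1 atTop (nhds 1))
    (hpos : 0 < ∫ u in Ioc (0:ℝ) 1, (genInv F1 u) ^ 2)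
    (hfin : IntegrableOn (fun u => (genInv F1 u) ^ 2) (Ioc (0:ℝ) 1))
    (hL0 : ∀ x, L 0 x =
      (∫ u in Ioc (0:ℝ) x, (genInv F1 u) ^ 2) / ∫ u in Ioc (0:ℝ) 1, (genInv F1 u) ^ 2)
    (hLrec : ∀ i x, L (i + 1) x =
      (∫ u in Ioc (0:ℝ) x, (genInv (L i) u) ^ 2) /
        ∫ u in Ioc (0:ℝ) 1, (genInv (L i) u) ^ 2) :
    TendstoUniformlyOn (fun n x => L n x) (fun x => x ^ 2) atTop (Icc (0:ℝ) 1) :=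
  stmt10_general F1 L hF1mono hF1lim hpos hfin hL0 hLrec
end

section
/- Let L : [0,1] → [0,1] be a continuous strictly increasing bijection with L(0)=0 and L(1)=1, let K = L^{-1} be its inverse, and define L⁺(x) = (∫_0^x K(u)(1−K(u)) du) / (∫_0^1 K(u)(1−K(u)) du). Then: (i) L⁺(0)=0 and L⁺(1)=1, so 0 and 1 are fixed points of L⁺; (ii) L⁺ has a unique fixed point l in (0,1); (iii) L⁺(x) < x for all x ∈ (0,l) and L⁺(x) > x for all x ∈ (l,1); and (iv) there is a closed interval I ⊂ (0,1) with l ∈ I such that the derivative (L⁺)'(x) = K(x)(1−K(x)) / (∫_0^1 K(u)(1−K(u)) du) satisfies (L⁺)'(x) ≥ 1 for all x ∈ I. -/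
open MeasureTheory Set

private lemma my_integral_lt_const {f : ℝ → ℝ} {x y c : ℝ} (hxy : x < y)
    (hfi : IntervalIntegrable f volume x y)
    (h : ∀ u ∈ Ioo x y, f u < c) :
    ∫ u in x..y, f u < c * (y - x) := by
  have h1 : 0 < ∫ u in x..y, (c - f u) :=
    intervalIntegral.intervalIntegral_pos_of_pos_on
      (IntervalIntegrable.sub intervalIntegrable_const hfi)
      (fun u hu => by linarith [h u hu]) hxy
  have h2 : ∫ u in x..y, (c - f u) = c * (y - x) - ∫ u in x..y, f u := by
    rw [intervalIntegral.integral_sub intervalIntegrable_const hfi,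
      intervalIntegral.integral_const, smul_eq_mul]
    ring
  linarith

private lemma my_const_lt_integral {f : ℝ → ℝ} {x y c : ℝ} (hxy : x < y)
    (hfi : IntervalIntegrable f volume x y)
    (h : ∀ u ∈ Ioo x y, c < f u) :
    c * (y - x) < ∫ u in x..y, f u := by
  have h1 : 0 < ∫ u in x..y, (f u - c) :=
    intervalIntegral.intervalIntegral_pos_of_pos_on
      (hfi.sub intervalIntegrable_const)
      (fun u hu => by linarith [h u hu]) hxy
  have h2 : ∫ u in x..y, (f u - c) = (∫ u in x..y, f u) - c * (y - x) := by
    rw [intervalIntegral.integral_sub hfi intervalIntegrable_const,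
      intervalIntegral.integral_const, smul_eq_mul]
    ring
  linarith

/-- One step of the countermonotone marginal Lorenz iteration built from the inverse `K`:
`L⁺(x) = (∫_0^x K(u)(1−K(u)) du) / (∫_0^1 K(u)(1−K(u)) du)`. -/
noncomputable def Lplus (K : ℝ → ℝ) (x : ℝ) : ℝ :=
  (∫ u in Ioc (0:ℝ) x, K u * (1 - K u)) / ∫ u in Ioc (0:ℝ) 1, K u * (1 - K u)

set_option maxHeartbeats 2000000 in
/-- Claim 15: `L⁺` fixes `0` and `1`, has a unique interior fixed point `l`, lies below the
diagonal on `(0,l)` and above it on `(l,1)`, and there is a closed subinterval of `(0,1)`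
containing `l` on which the derivative of `L⁺` is at least `1`. -/
theorem stmt11 (L K : ℝ → ℝ)
    (hLcont : ContinuousOn L (Icc (0:ℝ) 1))
    (hLmono : StrictMonoOn L (Icc (0:ℝ) 1))
    (hL0 : L 0 = 0) (hL1 : L 1 = 1)
    (hLmaps : MapsTo L (Icc (0:ℝ) 1) (Icc (0:ℝ) 1))
    (hKmaps : MapsTo K (Icc (0:ℝ) 1) (Icc (0:ℝ) 1))
    (hKL : ∀ x ∈ Icc (0:ℝ) 1, K (L x) = x)
    (hLK : ∀ x ∈ Icc (0:ℝ) 1, L (K x) = x) :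
    (Lplus K 0 = 0 ∧ Lplus K 1 = 1) ∧
    ∃ l ∈ Ioo (0:ℝ) 1,
      Lplus K l = l ∧
      (∀ l' ∈ Ioo (0:ℝ) 1, Lplus K l' = l' → l' = l) ∧
      (∀ x ∈ Ioo (0:ℝ) l, Lplus K x < x) ∧
      (∀ x ∈ Ioo l 1, x < Lplus K x) ∧
      ∃ a b : ℝ, 0 < a ∧ b < 1 ∧ a ≤ l ∧ l ≤ b ∧
        ∀ x ∈ Icc a b,
          1 ≤ K x * (1 - K x) / ∫ u in Ioc (0:ℝ) 1, K u * (1 - K u) := by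
  set f : ℝ → ℝ := fun u => K u * (1 - K u) with hfdef
  have h01 : (0:ℝ) ∈ Icc (0:ℝ) 1 := by constructor <;> norm_num
  have h11 : (1:ℝ) ∈ Icc (0:ℝ) 1 := by constructor <;> norm_num
  have hhalf : (1/2 : ℝ) ∈ Icc (0:ℝ) 1 := by constructor <;> norm_num
  have hK0 : K 0 = 0 := by have h := hKL 0 h01; rwa [hL0] at h
  have hK1 : K 1 = 1 := by have h := hKL 1 h11; rwa [hL1] at h
  -- K is strictly monotone on [0,1]
  have hKmono : StrictMonoOn K (Icc (0:ℝ) 1) := by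
    intro x hx y hy hxy
    by_contra h
    push_neg at h
    have h2 := hLmono.monotoneOn (hKmaps hy) (hKmaps hx) h
    rw [hLK x hx, hLK y hy] at h2
    linarith
  have hKmonoOn : MonotoneOn K (Icc (0:ℝ) 1) := hKmono.monotoneOn
  -- integrability of f
  have hKint : IntegrableOn K (Icc (0:ℝ) 1) volume :=
    hKmonoOn.integrableOn_isCompact isCompact_Icc
  have hK2int : IntegrableOn (fun u => K u * K u) (Icc (0:ℝ) 1) volume := by
    refine MonotoneOn.integrableOn_isCompact isCompact_Icc ?_
    intro x hx y hy hxy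
    have h0 : 0 ≤ K x := (hKmaps hx).1
    have h1 := hKmonoOn hx hy hxy
    show K x * K x ≤ K y * K y
    nlinarith
  have hfint : IntegrableOn f (Icc (0:ℝ) 1) volume := by
    have he : f = fun u => K u - K u * K u := by
      ext u; simp only [hfdef]; ring
    rw [he]
    exact hKint.sub hK2int
  have hii : ∀ x y : ℝ, x ∈ Icc (0:ℝ) 1 → y ∈ Icc (0:ℝ) 1 →
      IntervalIntegrable f volume x y := by
    intro x y hx hy
    exact (hfint.mono_set (uIcc_subset_Icc hx hy)).intervalIntegrable
  -- notation
  set D : ℝ := ∫ u in Ioc (0:ℝ) 1, f u with hDdef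
  set F : ℝ → ℝ := fun x => ∫ u in Ioc (0:ℝ) x, f u with hFdef
  have hLp : ∀ x, Lplus K x = F x / D := fun x => rfl
  have hFe : ∀ x : ℝ, 0 ≤ x → F x = ∫ u in (0:ℝ)..x, f u := by
    intro x hx
    simp only [hFdef]
    rw [intervalIntegral.integral_of_le hx]
  have hDe : D = ∫ u in (0:ℝ)..1, f u := by
    rw [hDdef, intervalIntegral.integral_of_le (by norm_num : (0:ℝ) ≤ 1)]
  have hF0 : F 0 = 0 := by simp [hFdef]
  have hF1 : F 1 = D := rfl
  clear_value f D F
  -- f positive on the interior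
  have hKin : ∀ u ∈ Ioo (0:ℝ) 1, K u ∈ Ioo (0:ℝ) 1 := by
    intro u hu
    have huI : u ∈ Icc (0:ℝ) 1 := ⟨hu.1.le, hu.2.le⟩
    constructor
    · have := hKmono h01 huI hu.1; rwa [hK0] at this
    · have := hKmono huI h11 hu.2; rwa [hK1] at this
  have hfpos : ∀ u ∈ Ioo (0:ℝ) 1, 0 < f u := by
    intro u hu
    obtain ⟨h1, h2⟩ := hKin u hu
    simp only [hfdef]
    nlinarith
  have hD0 : 0 < D := by
    rw [hDe]
    exact intervalIntegral.intervalIntegral_pos_of_pos_on (hii 0 1 h01 h11) hfpos (by norm_num)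
  -- midpoint m
  set m : ℝ := L (1/2) with hmdef
  have hm : m ∈ Ioo (0:ℝ) 1 := by
    constructor
    · have := hLmono h01 hhalf (by norm_num); rwa [hL0] at this
    · have := hLmono hhalf h11 (by norm_num); rwa [hL1] at this
  have hmI : m ∈ Icc (0:ℝ) 1 := ⟨hm.1.le, hm.2.le⟩
  have hKm : K m = 1/2 := hKL (1/2) hhalf
  -- strict monotonicity of f on [0,m] and strict antitonicity on [m,1]
  have hfmono : ∀ x ∈ Icc (0:ℝ) m, ∀ y ∈ Icc (0:ℝ) m, x < y → f x < f y := by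
    intro x hx y hy hxy
    have hxI : x ∈ Icc (0:ℝ) 1 := ⟨hx.1, hx.2.trans hm.2.le⟩
    have hyI : y ∈ Icc (0:ℝ) 1 := ⟨hy.1, hy.2.trans hm.2.le⟩
    have h1 : K x < K y := hKmono hxI hyI hxy
    have h2 : K y ≤ 1/2 := by
      have := hKmonoOn hyI hmI hy.2; rwa [hKm] at this
    have h0 : 0 ≤ K x := (hKmaps hxI).1
    simp only [hfdef]
    nlinarith
  have hfanti : ∀ x ∈ Icc m 1, ∀ y ∈ Icc m 1, x < y → f y < f x := by
    intro x hx y hy hxy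
    have hxI : x ∈ Icc (0:ℝ) 1 := ⟨hm.1.le.trans hx.1, hx.2⟩
    have hyI : y ∈ Icc (0:ℝ) 1 := ⟨hm.1.le.trans hy.1, hy.2⟩
    have h1 : K x < K y := hKmono hxI hyI hxy
    have h2 : 1/2 ≤ K x := by
      have := hKmonoOn hmI hxI hx.1; rwa [hKm] at this
    have h3 : K y ≤ 1 := (hKmaps hyI).2
    simp only [hfdef]
    nlinarith
  -- D < 1/4
  have hD14 : D < 1/4 := by
    have hpos : 0 < ∫ u in (0:ℝ)..m, (1/4 - f u) := by
      refine intervalIntegral.intervalIntegral_pos_of_pos_on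
        (IntervalIntegrable.sub intervalIntegrable_const (hii 0 m h01 hmI)) ?_ hm.1
      intro u hu
      have huI : u ∈ Icc (0:ℝ) 1 := ⟨hu.1.le, hu.2.le.trans hm.2.le⟩
      have h1 : K u < 1/2 := by
        have := hKmono huI hmI hu.2; rwa [hKm] at this
      have h0 : 0 ≤ K u := (hKmaps huI).1
      simp only [hfdef]
      nlinarith
    have hnn : 0 ≤ ∫ u in m..1, (1/4 - f u) := by
      refine intervalIntegral.integral_nonneg hm.2.le ?_
      intro u hu
      have huI : u ∈ Icc (0:ℝ) 1 := ⟨hm.1.le.trans hu.1, hu.2⟩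
      have h0 : 0 ≤ K u := (hKmaps huI).1
      have h1 : K u ≤ 1 := (hKmaps huI).2
      simp only [hfdef]
      nlinarith [sq_nonneg (K u - 1/2)]
    have hadd : (∫ u in (0:ℝ)..m, (1/4 - f u)) + ∫ u in m..1, (1/4 - f u)
        = ∫ u in (0:ℝ)..1, (1/4 - f u) := by
      refine intervalIntegral.integral_add_adjacent_intervals ?_ ?_
      · exact IntervalIntegrable.sub intervalIntegrable_const (hii 0 m h01 hmI)
      · exact IntervalIntegrable.sub intervalIntegrable_const (hii m 1 hmI h11)
    have heq : ∫ u in (0:ℝ)..1, ((1:ℝ)/4 - f u) = 1/4 - D := by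
      rw [intervalIntegral.integral_sub intervalIntegrable_const (hii 0 1 h01 h11),
        intervalIntegral.integral_const, smul_eq_mul, ← hDe]
      ring
    linarith [hadd, heq]
  -- the two roots of t(1-t) = D
  set s : ℝ := Real.sqrt (1 - 4*D) with hsdef
  have hs2 : s^2 = 1 - 4*D := Real.sq_sqrt (by linarith)
  have hs0 : 0 < s := Real.sqrt_pos.mpr (by linarith)
  have hs1 : s < 1 := by nlinarith
  set t₁ : ℝ := (1 - s)/2 with ht₁def
  set t₂ : ℝ := (1 + s)/2 with ht₂def
  have ht₁ : 0 < t₁ ∧ t₁ < 1/2 := ⟨by simp only [ht₁def]; linarith, by simp only [ht₁def]; linarith⟩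
  have ht₂ : 1/2 < t₂ ∧ t₂ < 1 := ⟨by simp only [ht₂def]; linarith, by simp only [ht₂def]; linarith⟩
  have ht₁D : t₁ * (1 - t₁) = D := by simp only [ht₁def]; nlinarith
  have ht₂D : t₂ * (1 - t₂) = D := by simp only [ht₂def]; nlinarith
  have ht₁I : t₁ ∈ Icc (0:ℝ) 1 := ⟨ht₁.1.le, by linarith [ht₁.2]⟩
  have ht₂I : t₂ ∈ Icc (0:ℝ) 1 := ⟨by linarith [ht₂.1], ht₂.2.le⟩
  set α : ℝ := L t₁ with hαdef
  set β : ℝ := L t₂ with hβdef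
  have hα : 0 < α ∧ α < m := by
    constructor
    · have := hLmono h01 ht₁I ht₁.1; rwa [hL0] at this
    · exact hLmono ht₁I hhalf ht₁.2
  have hβ : m < β ∧ β < 1 := by
    constructor
    · exact hLmono hhalf ht₂I ht₂.1
    · have := hLmono ht₂I h11 ht₂.2; rwa [hL1] at this
  have hαI : α ∈ Icc (0:ℝ) 1 := ⟨hα.1.le, hα.2.le.trans hm.2.le⟩
  have hβI : β ∈ Icc (0:ℝ) 1 := ⟨hm.1.le.trans hβ.1.le, hβ.2.le⟩
  have hfα : f α = D := by
    simp only [hfdef, hαdef]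
    rw [hKL t₁ ht₁I]
    exact ht₁D
  have hfβ : f β = D := by
    simp only [hfdef, hβdef]
    rw [hKL t₂ ht₂I]
    exact ht₂D
  have hαβ : α < β := hα.2.trans hβ.1
  -- pointwise comparison of f with D
  have hflt1 : ∀ u ∈ Ioo (0:ℝ) α, f u < D := by
    intro u hu
    have := hfmono u ⟨hu.1.le, hu.2.le.trans hα.2.le⟩ α ⟨hα.1.le, hα.2.le⟩ hu.2
    rwa [hfα] at this
  have hfgt : ∀ u ∈ Ioo α β, D < f u := by
    intro u hu
    rcases le_or_gt u m with h | h
    · have := hfmono α ⟨hα.1.le, hα.2.le⟩ u ⟨hα.1.le.trans hu.1.le, h⟩ hu.1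
      rwa [hfα] at this
    · have := hfanti u ⟨h.le, hu.2.le.trans hβ.2.le⟩ β ⟨hβ.1.le, hβ.2.le⟩ hu.2
      rwa [hfβ] at this
  have hflt2 : ∀ u ∈ Ioo β 1, f u < D := by
    intro u hu
    have := hfanti β ⟨hβ.1.le, hβ.2.le⟩ u ⟨hβ.1.le.trans hu.1.le, hu.2.le⟩ hu.1
    rwa [hfβ] at this
  -- the auxiliary function g
  set g : ℝ → ℝ := fun x => F x - D * x with hgdef
  clear_value g
  have hg0 : g 0 = 0 := by simp [hgdef, hF0]
  have hg1 : g 1 = 0 := by simp [hgdef, hF1]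
  have hFdiff : ∀ x y : ℝ, x ∈ Icc (0:ℝ) 1 → y ∈ Icc (0:ℝ) 1 → x ≤ y →
      F y - F x = ∫ u in x..y, f u := by
    intro x y hx hy hxy
    have h := intervalIntegral.integral_add_adjacent_intervals
      (hii 0 x h01 hx) (hii x y hx hy)
    rw [hFe x hx.1, hFe y hy.1]
    linarith [h]
  -- strict monotonicity pieces of g
  have hdec1 : ∀ x y : ℝ, 0 ≤ x → x < y → y ≤ α → g y < g x := by
    intro x y hx hxy hy
    have hxI : x ∈ Icc (0:ℝ) 1 := ⟨hx, (hxy.le.trans hy).trans hαI.2⟩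
    have hyI : y ∈ Icc (0:ℝ) 1 := ⟨hx.trans hxy.le, hy.trans hαI.2⟩
    have h := my_integral_lt_const hxy (hii x y hxI hyI)
      (fun u hu => hflt1 u ⟨lt_of_le_of_lt hx hu.1, lt_of_lt_of_le hu.2 hy⟩)
    have h2 := hFdiff x y hxI hyI hxy.le
    have h3 : D * (y - x) = D * y - D * x := by ring
    simp only [hgdef]
    linarith
  have hinc : ∀ x y : ℝ, α ≤ x → x < y → y ≤ β → g x < g y := by
    intro x y hx hxy hy
    have hxI : x ∈ Icc (0:ℝ) 1 := ⟨hαI.1.trans hx, (hxy.le.trans hy).trans hβI.2⟩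
    have hyI : y ∈ Icc (0:ℝ) 1 := ⟨hxI.1.trans hxy.le, hy.trans hβI.2⟩
    have h := my_const_lt_integral hxy (hii x y hxI hyI)
      (fun u hu => hfgt u ⟨lt_of_le_of_lt hx hu.1, lt_of_lt_of_le hu.2 hy⟩)
    have h2 := hFdiff x y hxI hyI hxy.le
    have h3 : D * (y - x) = D * y - D * x := by ring
    simp only [hgdef]
    linarith
  have hdec2 : ∀ x y : ℝ, β ≤ x → x < y → y ≤ 1 → g y < g x := by
    intro x y hx hxy hy
    have hxI : x ∈ Icc (0:ℝ) 1 := ⟨hβI.1.trans hx, hxy.le.trans hy⟩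
    have hyI : y ∈ Icc (0:ℝ) 1 := ⟨hxI.1.trans hxy.le, hy⟩
    have h := my_integral_lt_const hxy (hii x y hxI hyI)
      (fun u hu => hflt2 u ⟨lt_of_le_of_lt hx hu.1, lt_of_lt_of_le hu.2 hy⟩)
    have h2 := hFdiff x y hxI hyI hxy.le
    have h3 : D * (y - x) = D * y - D * x := by ring
    simp only [hgdef]
    linarith
  -- values at α and β
  have hgα : g α < 0 := by
    have := hdec1 0 α le_rfl hα.1 le_rfl
    rwa [hg0] at this
  have hgβ : 0 < g β := by
    have := hdec2 β 1 le_rfl hβ.2 le_rfl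
    rwa [hg1] at this
  -- continuity and IVT
  have hgcont : ContinuousOn g (Icc α β) := by
    have hFcont : ContinuousOn F (Icc (0:ℝ) 1) := by
      rw [hFdef]
      exact intervalIntegral.continuousOn_primitive hfint
    have h1 : ContinuousOn F (Icc α β) :=
      hFcont.mono (Icc_subset_Icc hαI.1 hβI.2)
    rw [hgdef]
    exact h1.sub ((continuous_mul_left D).continuousOn)
  obtain ⟨l, hlαβ, hgl⟩ : ∃ l ∈ Ioo α β, g l = 0 := by
    have h := intermediate_value_Ioo hαβ.le hgcont
    have h0 : (0:ℝ) ∈ Ioo (g α) (g β) := ⟨hgα, hgβ⟩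
    obtain ⟨l, hl, hgl⟩ := h h0
    exact ⟨l, hl, hgl⟩
  have hl01 : l ∈ Ioo (0:ℝ) 1 := ⟨hα.1.trans hlαβ.1, hlαβ.2.trans hβ.2⟩
  have hFl : F l = D * l := by
    have h := hgl
    simp only [hgdef] at h
    linarith
  -- sign facts for g on (0,l) and (l,1)
  have hneg : ∀ x ∈ Ioo (0:ℝ) l, g x < 0 := by
    intro x hx
    rcases le_or_gt x α with h | h
    · have := hdec1 0 x le_rfl hx.1 h
      rwa [hg0] at this
    · have := hinc x l h.le hx.2 hlαβ.2.le
      rwa [hgl] at this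
  have hpos' : ∀ x ∈ Ioo l 1, 0 < g x := by
    intro x hx
    rcases le_or_gt x β with h | h
    · have := hinc l x hlαβ.1.le hx.1 h
      rwa [hgl] at this
    · have := hdec2 x 1 h.le hx.2 le_rfl
      rwa [hg1] at this
  -- translate g facts to Lplus facts
  have hfix : ∀ x : ℝ, Lplus K x = x ↔ F x = D * x := by
    intro x
    rw [hLp x, div_eq_iff hD0.ne', mul_comm x D]
  refine ⟨⟨?_, ?_⟩, l, hl01, ?_, ?_, ?_, ?_, l, l, hl01.1, hl01.2, le_rfl, le_rfl, ?_⟩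
  · rw [hLp 0, hF0, zero_div]
  · rw [hLp 1, hF1, div_self hD0.ne']
  · rw [hfix l]; exact hFl
  · -- uniqueness
    intro l' hl' hfixl'
    by_contra hne
    rcases lt_or_gt_of_ne hne with h | h
    · have hg' := hneg l' ⟨hl'.1, h⟩
      have : F l' = D * l' := (hfix l').mp hfixl'
      simp only [hgdef] at hg'
      linarith
    · have hg' := hpos' l' ⟨h, hl'.2⟩
      have : F l' = D * l' := (hfix l').mp hfixl'
      simp only [hgdef] at hg'
      linarith
  · -- below the diagonal on (0,l)
    intro x hx
    have hg' := hneg x hx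
    simp only [hgdef] at hg'
    rw [hLp x, div_lt_iff₀ hD0]
    linarith
  · -- above the diagonal on (l,1)
    intro x hx
    have hg' := hpos' x hx
    simp only [hgdef] at hg'
    rw [hLp x, lt_div_iff₀ hD0]
    linarith
  · -- derivative bound on [l,l]
    intro x hx
    have hxl : x = l := le_antisymm hx.2 hx.1
    subst hxl
    have hfl : D < f x := hfgt x hlαβ
    rw [le_div_iff₀ hD0, one_mul]
    simp only [hfdef] at hfl
    exact hfl.le
end

section
/- Let l : [0,1]^2 → [0,∞) be an RR2 density, i.e., l(u1,v1)·l(u2,v2) ≤ l(u1,v2)·l(u2,v1) whenever 0 ≤ u1 < u2 ≤ 1 and 0 ≤ v1 < v2 ≤ 1, let a, b : [0,1] → [0,1] be nondecreasing differentiable maps, and let D > 0. Then the function l⁺(x1,x2) = (1/D) · a(x1) · b(x2) · l(a(x1), b(x2)) · a'(x1) · b'(x2) is RR2 on [0,1]^2. In particular, in the bivariate Lorenz-curve iteration, where a = L_1^{n,-1}, b = L_2^{n,-1} are the (nondecreasing, differentiable) inverse marginal distribution functions and D = ∫_0^1∫_0^1 u1 u2 l_n(u1,u2) du1 du2, if the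 density l_n of the n-th iterate is RR2 then the density l_{n+1}(x1,x2) = (1/D) L_1^{n,-1}(x1) L_2^{n,-1}(x2) l_n(L_1^{n,-1}(x1), L_2^{n,-1}(x2)) (L_1^{n,-1})'(x1) (L_2^{n,-1})'(x2) of the next iterate is RR2. -/
open Set

open Set Filter Topology in

lemma deriv_nonneg_of_monotoneOn_Icc (a : ℝ → ℝ)
    (h : MonotoneOn a (Icc (0:ℝ) 1)) {x : ℝ} (hx : x ∈ Icc (0:ℝ) 1)
    (hd : DifferentiableAt ℝ a x) : 0 ≤ deriv a x := by
  have H := hd.hasDerivAt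
  rw [hasDerivAt_iff_tendsto_slope] at H
  rcases lt_or_eq_of_le hx.2 with hx1 | hx1
  · -- x < 1, use right slopes
    have Ht : Tendsto (slope a x) (𝓝[>] x) (𝓝 (deriv a x)) :=
      H.mono_left (nhdsWithin_mono _ (fun y hy => ne_of_gt hy))
    refine ge_of_tendsto Ht ?_
    have hmem : Ioc x 1 ∈ 𝓝[>] x := by
      rw [← Ioi_inter_Iic]
      exact inter_mem_nhdsWithin _ (Iic_mem_nhds hx1)
    filter_upwards [hmem] with y hy
    have hyI : y ∈ Icc (0:ℝ) 1 := ⟨le_trans hx.1 hy.1.le, hy.2⟩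
    have := h hx hyI hy.1.le
    rw [slope_def_field]
    exact div_nonneg (by linarith) (by linarith [hy.1])
  · -- x = 1, use left slopes
    have Ht : Tendsto (slope a x) (𝓝[<] x) (𝓝 (deriv a x)) :=
      H.mono_left (nhdsWithin_mono _ (fun y hy => ne_of_lt hy))
    refine ge_of_tendsto Ht ?_
    have h01 : (0:ℝ) < x := by rw [hx1]; norm_num
    have hmem : Ico 0 x ∈ 𝓝[<] x := by
      rw [← Ici_inter_Iio, inter_comm]
      exact inter_mem_nhdsWithin _ (Ici_mem_nhds h01)
    filter_upwards [hmem] with y hy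
    have hyI : y ∈ Icc (0:ℝ) 1 := ⟨hy.1, le_trans hy.2.le hx.2⟩
    have := h hyI hx hy.2.le
    rw [slope_def_field]
    exact div_nonneg_of_nonpos (by linarith) (by linarith [hy.2])


/-- Reverse regularity of order 2 on `s × s`:
`h(u1,v1)·h(u2,v2) ≤ h(u1,v2)·h(u2,v1)` whenever `u1 < u2` and `v1 < v2`. -/
def IsRR2On (h : ℝ → ℝ → ℝ) (s : Set ℝ) : Prop :=
  ∀ u1 ∈ s, ∀ u2 ∈ s, ∀ v1 ∈ s, ∀ v2 ∈ s, u1 < u2 → v1 < v2 →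
    h u1 v1 * h u2 v2 ≤ h u1 v2 * h u2 v1

/-- RR2 preservation: if `l` is an RR2 density on `[0,1]²`, `a, b : [0,1] → [0,1]` are
nondecreasing differentiable maps and `D > 0`, then
`l⁺(x1,x2) = (1/D) a(x1) b(x2) l(a(x1),b(x2)) a'(x1) b'(x2)` is RR2 on `[0,1]²`.
(In particular, the density of the next bivariate Lorenz iterate, obtained with
`a = L_1^{n,-1}`, `b = L_2^{n,-1}` and `D = ∫∫ u1 u2 l_n`, is RR2 whenever `l_n` is.) -/
theorem stmt17 (l : ℝ → ℝ → ℝ) (a b : ℝ → ℝ) (D : ℝ)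
    (hlnn : ∀ u ∈ Icc (0:ℝ) 1, ∀ v ∈ Icc (0:ℝ) 1, 0 ≤ l u v)
    (hRR2 : IsRR2On l (Icc (0:ℝ) 1))
    (hamono : MonotoneOn a (Icc (0:ℝ) 1)) (hbmono : MonotoneOn b (Icc (0:ℝ) 1))
    (hamaps : MapsTo a (Icc (0:ℝ) 1) (Icc (0:ℝ) 1))
    (hbmaps : MapsTo b (Icc (0:ℝ) 1) (Icc (0:ℝ) 1))
    (hadiff : ∀ x ∈ Icc (0:ℝ) 1, DifferentiableAt ℝ a x)
    (hbdiff : ∀ x ∈ Icc (0:ℝ) 1, DifferentiableAt ℝ b x)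
    (hD : 0 < D) :
    IsRR2On
      (fun x1 x2 => (1 / D) * a x1 * b x2 * l (a x1) (b x2) * deriv a x1 * deriv b x2)
      (Icc (0:ℝ) 1) := by
  intro u1 hu1 u2 hu2 v1 hv1 v2 hv2 hu hv
  simp only []
  have hA1 := hamaps hu1; have hA2 := hamaps hu2
  have hB1 := hbmaps hv1; have hB2 := hbmaps hv2
  have hda1 := deriv_nonneg_of_monotoneOn_Icc a hamono hu1 (hadiff _ hu1)
  have hda2 := deriv_nonneg_of_monotoneOn_Icc a hamono hu2 (hadiff _ hu2)
  have hdb1 := deriv_nonneg_of_monotoneOn_Icc b hbmono hv1 (hbdiff _ hv1)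
  have hdb2 := deriv_nonneg_of_monotoneOn_Icc b hbmono hv2 (hbdiff _ hv2)
  have key : l (a u1) (b v1) * l (a u2) (b v2) ≤ l (a u1) (b v2) * l (a u2) (b v1) := by
    rcases eq_or_lt_of_le (hamono hu1 hu2 hu.le) with hA | hA
    · rw [← hA]; ring_nf; exact le_refl _
    · rcases eq_or_lt_of_le (hbmono hv1 hv2 hv.le) with hB | hB
      · rw [← hB]
      · exact hRR2 _ hA1 _ hA2 _ hB1 _ hB2 hA hB
  have hK : 0 ≤ (1/D) * (1/D) * a u1 * a u2 * b v1 * b v2 *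
      deriv a u1 * deriv a u2 * deriv b v1 * deriv b v2 := by
    have : (0:ℝ) ≤ 1/D := by positivity
    have h1 := hA1.1; have h2 := hA2.1; have h3 := hB1.1; have h4 := hB2.1
    positivity
  calc (1 / D * a u1 * b v1 * l (a u1) (b v1) * deriv a u1 * deriv b v1) *
        (1 / D * a u2 * b v2 * l (a u2) (b v2) * deriv a u2 * deriv b v2)
      = ((1/D) * (1/D) * a u1 * a u2 * b v1 * b v2 *
          deriv a u1 * deriv a u2 * deriv b v1 * deriv b v2) *
          (l (a u1) (b v1) * l (a u2) (b v2)) := by ring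
    _ ≤ ((1/D) * (1/D) * a u1 * a u2 * b v1 * b v2 *
          deriv a u1 * deriv a u2 * deriv b v1 * deriv b v2) *
          (l (a u1) (b v2) * l (a u2) (b v1)) := mul_le_mul_of_nonneg_left key hK
    _ = (1 / D * a u1 * b v2 * l (a u1) (b v2) * deriv a u1 * deriv b v2) *
        (1 / D * a u2 * b v1 * l (a u2) (b v1) * deriv a u2 * deriv b v1) := by ring
end

section
/- Let 𝒳 and 𝒱 be intervals in ℝ and let f(x,v) > 0 be a family of probability densities on 𝒳 × 𝒱 such that: (i) for any v1 < v2 in 𝒱, the likelihood ratio x ↦ f(x,v2)/f(x,v1) is nonincreasing in x (RR2 property); (ii) for each fixed v, the log-density x ↦ log f(x,v) is real-analytic and strictly log-concave on the interior of its support; and (iii) for every pair v1 < v2, the function x ↦ log f(x,v2) − log f(x,v1) is not constant on the interior of the common support. Then f has the strict RR2 property: for any v1 < v2, the ratio x ↦ f(x,v2)/f(x,v1) is strictly decreasing on the interior of the common support. -/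
open Set

/-- Lemma 30 (strict RR2 from RR2 plus analyticity, strict log-concavity and
non-degeneracy): if a family of positive probability densities `f(x,v)` on `𝒳 × 𝒱` has
nonincreasing likelihood ratios (RR2), real-analytic strictly log-concave log-densities,
and no pair `v1 < v2` whose log-density difference is constant, then all likelihood
ratios are strictly decreasing (SRR2). -/
theorem stmt18 (X V : Set ℝ) (f : ℝ → ℝ → ℝ)
    (hX : Convex ℝ X) (hV : Convex ℝ V)
    (hfpos : ∀ x ∈ X, ∀ v ∈ V, 0 < f x v)
    (hdens : ∀ v ∈ V, ∫ x in X, f x v = 1)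
    (hRR2 : ∀ v1 ∈ V, ∀ v2 ∈ V, v1 < v2 → AntitoneOn (fun x => f x v2 / f x v1) X)
    (hanal : ∀ v ∈ V, AnalyticOnNhd ℝ (fun x => Real.log (f x v)) (interior X))
    (hconc : ∀ v ∈ V, StrictConcaveOn ℝ (interior X) (fun x => Real.log (f x v)))
    (hnondeg : ∀ v1 ∈ V, ∀ v2 ∈ V, v1 < v2 →
      ¬ ∃ c : ℝ, ∀ x ∈ interior X, Real.log (f x v2) - Real.log (f x v1) = c) :
    ∀ v1 ∈ V, ∀ v2 ∈ V, v1 < v2 →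
      StrictAntiOn (fun x => f x v2 / f x v1) (interior X) := by
  intro v1 hv1 v2 hv2 hlt x hx y hy hxy
  have hsub : interior X ⊆ X := interior_subset
  have hle := hRR2 v1 hv1 v2 hv2 hlt (hsub hx) (hsub hy) hxy.le
  rcases lt_or_eq_of_le hle with h | h
  · exact h
  exfalso
  set g : ℝ → ℝ := fun z => Real.log (f z v2) - Real.log (f z v1) with hgdef
  have hganal : AnalyticOnNhd ℝ g (interior X) :=
    (hanal v2 hv2).sub (hanal v1 hv1)
  have hseg : Icc x y ⊆ interior X := hX.interior.ordConnected.out hx hy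
  -- ratio is constant on [x,y]
  have hgconst : ∀ t ∈ Icc x y, g t = g x := by
    intro t ht
    have htX : t ∈ X := hsub (hseg ht)
    have h1 : f t v2 / f t v1 ≤ f x v2 / f x v1 :=
      hRR2 v1 hv1 v2 hv2 hlt (hsub hx) htX ht.1
    have h2 : f y v2 / f y v1 ≤ f t v2 / f t v1 :=
      hRR2 v1 hv1 v2 hv2 hlt htX (hsub hy) ht.2
    have heq : f t v2 / f t v1 = f x v2 / f x v1 := by simp only [] at h; linarith
    have hlog : ∀ z ∈ X, g z = Real.log (f z v2 / f z v1) := by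
      intro z hz
      rw [Real.log_div (hfpos z hz v2 hv2).ne' (hfpos z hz v1 hv1).ne']
    rw [hlog t htX, hlog x (hsub hx), heq]
  -- identity theorem
  set m : ℝ := (x + y) / 2 with hmdef
  have hxm : x < m := by simp [hmdef]; linarith
  have hmy : m < y := by simp [hmdef]; linarith
  have hm : m ∈ interior X := hseg ⟨hxm.le, hmy.le⟩
  have hev : (fun z => g z - g x) =ᶠ[nhds m] 0 := by
    filter_upwards [Ioo_mem_nhds hxm hmy] with t ht
    simp [hgconst t ⟨ht.1.le, ht.2.le⟩]
  have hzero : EqOn (fun z => g z - g x) 0 (interior X) :=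
    (hganal.sub analyticOnNhd_const).eqOn_zero_of_preconnected_of_eventuallyEq_zero
      hX.interior.isPreconnected hm hev
  exact hnondeg v1 hv1 v2 hv2 hlt ⟨g x, fun z hz => by
    have := hzero hz; simpa [sub_eq_zero] using this⟩
end
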